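/- arXiv:1602.02407 — 3 statements merged into one kernel-verified Lean document; each statement's English description precedes it below -/
import Mathlib

section
/- Let p be a prime. Then M_p^(0) = {n ∈ {1, 2, 6, 42, 1806} : p ≡ 1 (mod n)}; that is, a positive integer n not divisible by p satisfies S_n(n) ≡ p (mod n) if and only if n ∈ {1, 2, 6, 42, 1806} and p ≡ 1 (mod n). -/
/-!
For a prime `q ∣ n`, the sum `S n n` runs through `n / q` full periods of `x ↦ x ^ n` on
`ZMod q`, so the power sum over a finite field gives `S n n ≡ -(n / q) · [q - 1 ∣ n] (mod q)`.
If `S n n ≡ p (mod n)` with `p ∤ n`, then `p` is a unit modulo every such `q`, which forces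
`q - 1 ∣ n` and `q ∤ n / q`. Thus `n` is squarefree and `q - 1 ∣ n` for each prime `q ∣ n`; by
strong induction on `q`, each such `q` is one more than a squarefree divisor of `2 · 3 · 7 · 43`,
so `n ∣ 1806`, and a finite check leaves `n ∈ {1, 2, 6, 42, 1806}`. For these `n` one has
`n / q ≡ -1 (mod q)` for every prime `q ∣ n`, hence `S n n ≡ 1 (mod n)`, and both directions
reduce to `p ≡ S n n ≡ 1 (mod n)`.
-/

/-- `S k n = ∑_{i=1}^{n} i^k`. -/
def S (k n : ℕ) : ℕ := ∑ i ∈ Finset.Icc 1 n, i ^ k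

open Finset

theorem FiniteField.sum_pow_of_ne_zero {K : Type*} [Field K] [Fintype K] {k : ℕ} (hk : k ≠ 0) :
    ∑ x : K, x ^ k = if Fintype.card K - 1 ∣ k then -1 else 0 := by
  classical
  rw [← FiniteField.sum_pow_units, Fintype.sum_eq_add_sum_compl 0, zero_pow hk, zero_add,
    Finset.sum_subtype _ (p := (· ≠ 0)) (by simp), ← unitsEquivNeZero.sum_comp]
  rfl

theorem Squarefree.dvd_of_forall_prime_dvd {n m : ℕ} (hn : Squarefree n)
    (h : ∀ q, q.Prime → q ∣ n → q ∣ m) : n ∣ m := by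
  rw [← Nat.prod_primeFactors_of_squarefree hn]
  exact Finset.prod_primes_dvd m (fun q hq => (Nat.prime_of_mem_primeFactors hq).prime)
    fun q hq => h q (Nat.prime_of_mem_primeFactors hq) (Nat.dvd_of_mem_primeFactors hq)

theorem Squarefree.modEq_of_forall_prime_dvd {n a b : ℕ} (hn : Squarefree n)
    (h : ∀ q, q.Prime → q ∣ n → a ≡ b [MOD q]) : a ≡ b [MOD n] := by
  wlog hab : a ≤ b generalizing a b
  · exact (this (fun q hq hqn => (h q hq hqn).symm) (le_of_not_ge hab)).symm
  exact (Nat.modEq_iff_dvd' hab).2 <| hn.dvd_of_forall_prime_dvd fun q hq hqn =>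
    (Nat.modEq_iff_dvd' hab).1 (h q hq hqn)

theorem ZMod.sum_range_natCast {q : ℕ} [NeZero q] {M : Type*} [AddCommMonoid M]
    (f : ZMod q → M) : ∑ i ∈ range q, f i = ∑ x, f x :=
  Finset.sum_nbij' (fun i => (i : ZMod q)) ZMod.val (by simp) (by simp [ZMod.val_lt])
    (fun i hi => ZMod.val_cast_of_lt (mem_range.1 hi)) (fun x _ => ZMod.natCast_zmod_val x)
    (fun _ _ => rfl)

theorem ZMod.sum_range_mul_natCast {q : ℕ} [NeZero q] {M : Type*} [AddCommMonoid M]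
    (f : ZMod q → M) (m : ℕ) : ∑ i ∈ range (q * m), f i = m • ∑ x, f x := by
  induction m with
  | zero => simp
  | succ m ih =>
    simp only [Nat.mul_succ, sum_range_add, ih, Nat.cast_add, Nat.cast_mul, ZMod.natCast_self,
      zero_mul, zero_add, ZMod.sum_range_natCast, succ_nsmul]

theorem cast_S_mul (q m k : ℕ) [NeZero q] :
    (S k (q * m) : ZMod q) = m * ∑ x : ZMod q, x ^ k := by
  have hshift : ∑ x : ZMod q, (1 + x) ^ k = ∑ x : ZMod q, x ^ k :=
    Equiv.sum_comp (Equiv.addLeft (1 : ZMod q)) (· ^ k)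
  rw [S, Nat.cast_sum, ← Finset.Ico_add_one_right_eq_Icc, Finset.sum_Ico_eq_sum_range,
    Nat.add_sub_cancel, ← hshift, ← nsmul_eq_mul, ← ZMod.sum_range_mul_natCast]
  push_cast
  rfl

theorem cast_S_self_of_prime_dvd {q n : ℕ} (hq : q.Prime) (hqn : q ∣ n) (hn : n ≠ 0) :
    (S n n : ZMod q) = if q - 1 ∣ n then -((n / q : ℕ) : ZMod q) else 0 := by
  have := Fact.mk hq
  obtain ⟨m, rfl⟩ := hqn
  rw [cast_S_mul, FiniteField.sum_pow_of_ne_zero hn, ZMod.card, Nat.mul_div_cancel_left m hq.pos]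
  split_ifs <;> simp

theorem sub_one_dvd_and_not_dvd_div_of_S_self_modEq {p q n : ℕ} (hq : q.Prime) (hqn : q ∣ n)
    (hn : n ≠ 0) (hqp : ¬ q ∣ p) (h : S n n ≡ p [MOD q]) : q - 1 ∣ n ∧ ¬ q ∣ n / q := by
  have hp : (p : ZMod q) ≠ 0 := by rwa [Ne, ZMod.natCast_eq_zero_iff]
  rw [← (ZMod.natCast_eq_natCast_iff _ _ _).2 h, cast_S_self_of_prime_dvd hq hqn hn] at hp
  split_ifs at hp with hdvd
  · exact ⟨hdvd, fun hdiv => hp (by rw [(ZMod.natCast_eq_zero_iff _ _).2 hdiv, neg_zero])⟩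
  · exact absurd rfl hp

theorem S_self_modEq_one {n : ℕ} (hn : n ≠ 0)
    (h : ∀ q, q.Prime → q ∣ n → q - 1 ∣ n ∧ q ∣ n / q + 1) : S n n ≡ 1 [MOD n] := by
  have hsq : Squarefree n := Nat.squarefree_iff_prime_squarefree.2 fun q hq hqq =>
    hq.one_lt.ne' <| Nat.dvd_one.1 <|
      (Nat.dvd_add_right (Nat.dvd_div_of_mul_dvd hqq)).1 (h q hq (dvd_of_mul_left_dvd hqq)).2
  refine hsq.modEq_of_forall_prime_dvd fun q hq hqn => ?_
  rw [← ZMod.natCast_eq_natCast_iff, cast_S_self_of_prime_dvd hq hqn hn, if_pos (h q hq hqn).1,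
    Nat.cast_one, neg_eq_iff_add_eq_zero]
  exact_mod_cast (ZMod.natCast_eq_zero_iff _ _).2 (h q hq hqn).2

theorem mem_of_prime_dvd_1806 {q : ℕ} (hq : q.Prime) (hdvd : q ∣ 1806) :
    q ∈ ({2, 3, 7, 43} : Finset ℕ) := by
  have key : ∀ d ∈ Nat.divisors 1806, d.Prime → d ∈ ({2, 3, 7, 43} : Finset ℕ) := by
    simp only [Nat.divisors_ofNat, mem_insert, mem_singleton, forall_eq_or_imp, forall_eq]
    norm_num
  exact key q (Nat.mem_divisors.2 ⟨hdvd, by norm_num⟩) hq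

theorem succ_dvd_1806_of_dvd {d : ℕ} (hd : d ∣ 1806) (hp : (d + 1).Prime) : d + 1 ∣ 1806 := by
  have key : ∀ d ∈ Nat.divisors 1806, (d + 1).Prime → d + 1 ∣ 1806 := by
    simp only [Nat.divisors_ofNat, mem_insert, mem_singleton, forall_eq_or_imp, forall_eq]
    norm_num
  exact key d (Nat.mem_divisors.2 ⟨hd, by norm_num⟩) hp

theorem S_self_modEq_one_of_mem {n : ℕ} (hn : n ∈ ({1, 2, 6, 42, 1806} : Set ℕ)) :
    S n n ≡ 1 [MOD n] := by
  have key : ∀ n ∈ ({1, 2, 6, 42, 1806} : Finset ℕ), n ∣ 1806 ∧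
      ∀ q ∈ ({2, 3, 7, 43} : Finset ℕ), q ∣ n → q - 1 ∣ n ∧ q ∣ n / q + 1 := by
    decide
  obtain ⟨hdvd, hprimes⟩ := key n (by simpa using hn)
  exact S_self_modEq_one (ne_zero_of_dvd_ne_zero (by norm_num) hdvd) fun q hq hqn =>
    hprimes q (mem_of_prime_dvd_1806 hq (hqn.trans hdvd)) hqn

theorem mem_of_squarefree_of_forall_sub_one_dvd {n : ℕ} (hsq : Squarefree n)
    (h : ∀ q, q.Prime → q ∣ n → q - 1 ∣ n) : n ∈ ({1, 2, 6, 42, 1806} : Set ℕ) := by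
  have hprime : ∀ q, q.Prime → q ∣ n → q ∣ 1806 := by
    intro q
    induction q using Nat.strong_induction_on with
    | _ q ih =>
      intro hq hqn
      obtain ⟨d, rfl⟩ := Nat.exists_eq_add_one_of_ne_zero hq.ne_zero
      have hd : d ∣ n := by simpa using h _ hq hqn
      have hd0 : 0 < d := by have := hq.two_le; omega
      refine succ_dvd_1806_of_dvd ((hsq.squarefree_of_dvd hd).dvd_of_forall_prime_dvd
        fun r hr hrd => ih r (Nat.lt_succ_of_le (Nat.le_of_dvd hd0 hrd)) hr (hrd.trans hd)) hq
  have key : ∀ d ∈ Nat.divisors 1806, (∀ q ∈ ({3, 7, 43} : Finset ℕ), q ∣ d → q - 1 ∣ d) →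
      d ∈ ({1, 2, 6, 42, 1806} : Finset ℕ) := by
    simp only [Nat.divisors_ofNat]
    decide
  simpa using key n (Nat.mem_divisors.2 ⟨hsq.dvd_of_forall_prime_dvd hprime, by norm_num⟩)
    fun q hq hqn => h q (by fin_cases hq <;> norm_num) hqn

/-- For a prime `p`, `M_p^(0) = {n ∈ M_1 : p ≡ 1 (mod n)}` where
`M_1 = {1, 2, 6, 42, 1806}`. -/
theorem stmt_4 (p : ℕ) (hp : p.Prime) (n : ℕ) (hn : 0 < n) (hpn : ¬ p ∣ n) :
    S n n ≡ p [MOD n] ↔ (n ∈ ({1, 2, 6, 42, 1806} : Set ℕ) ∧ p ≡ 1 [MOD n]) := by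
  constructor
  · intro h
    have hlocal : ∀ q, q.Prime → q ∣ n → q - 1 ∣ n ∧ ¬ q ∣ n / q := fun q hq hqn =>
      sub_one_dvd_and_not_dvd_div_of_S_self_modEq hq hqn hn.ne'
        (fun hqp => hpn ((Nat.prime_dvd_prime_iff_eq hq hp).1 hqp ▸ hqn)) (h.of_dvd hqn)
    have hsq : Squarefree n := Nat.squarefree_iff_prime_squarefree.2 fun q hq hqq =>
      (hlocal q hq (dvd_of_mul_left_dvd hqq)).2 (Nat.dvd_div_of_mul_dvd hqq)
    have hmem := mem_of_squarefree_of_forall_sub_one_dvd hsq fun q hq hqn => (hlocal q hq hqn).1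
    exact ⟨hmem, h.symm.trans (S_self_modEq_one_of_mem hmem)⟩
  · rintro ⟨hmem, hp1⟩
    exact (S_self_modEq_one_of_mem hmem).trans hp1.symm
end

section
/- M_43 = {1, 2, 6, 42, 43, 86, 258, 77658}; that is, a positive integer n satisfies S_n(n) ≡ 43 (mod n) if and only if n ∈ {1, 2, 6, 42, 43, 86, 258, 77658}. -/
open Finset
open scoped Nat

theorem sum_pow_eq_zero_of_isUnit_pow_sub_one {R : Type*} [CommRing R] [Fintype R] {k : ℕ}
    (u : Rˣ) (hu : IsUnit ((u : R) ^ k - 1)) : ∑ x : R, x ^ k = 0 := by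
  refine hu.mul_right_eq_zero.mp ?_
  rw [sub_mul, one_mul, sub_eq_zero, mul_sum]
  simpa only [mul_pow] using u.mulLeft_bijective.sum_comp (· ^ k)

namespace ZMod

variable {p e : ℕ} [Fact p.Prime]

theorem pow_eq_zero_of_not_isUnit_of_prime_pow {x : ZMod (p ^ e)}
    (hx : ¬IsUnit x) : x ^ e = 0 := by
  have hpx : p ∣ x.val := by
    by_contra h
    refine hx ?_
    rw [← natCast_zmod_val x, isUnit_iff_coprime]
    exact (((Nat.Prime.coprime_iff_not_dvd Fact.out).mpr h).symm).pow_right e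
  rw [← natCast_zmod_val x, ← Nat.cast_pow, natCast_eq_zero_iff]
  exact pow_dvd_pow_of_dvd hpx e

theorem isUnit_of_castHom_ne_zero (he : e ≠ 0) {x : ZMod (p ^ e)}
    (hx : castHom (dvd_pow_self p he) (ZMod p) x ≠ 0) : IsUnit x := by
  by_contra h
  refine hx (pow_eq_zero_iff he |>.mp ?_)
  rw [← map_pow, pow_eq_zero_of_not_isUnit_of_prime_pow h, map_zero]

theorem sum_pow_prime_pow_of_not_sub_one_dvd (he : e ≠ 0) {k : ℕ}
    (hk : ¬p - 1 ∣ k) : ∑ x : ZMod (p ^ e), x ^ k = 0 := by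
  obtain ⟨g, hg⟩ : ∃ g : (ZMod p)ˣ, g ^ k ≠ 1 := by
    by_contra! h
    exact hk (by simpa only [card] using (FiniteField.forall_pow_eq_one_iff (ZMod p) k).mp h)
  obtain ⟨u, rfl⟩ := unitsMap_surjective (dvd_pow_self p he) g
  refine sum_pow_eq_zero_of_isUnit_pow_sub_one u (isUnit_of_castHom_ne_zero he ?_)
  rwa [map_sub, map_pow, map_one, sub_ne_zero, castHom_apply, ← unitsMap_val,
    ← Units.val_pow_eq_pow_val, Ne, Units.val_eq_one]

theorem sum_pow_prime_pow_of_totient_dvd {k : ℕ} (hk : φ (p ^ e) ∣ k)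
    (hek : e ≤ k) : ∑ x : ZMod (p ^ e), x ^ k = φ (p ^ e) := by
  classical
  calc ∑ x : ZMod (p ^ e), x ^ k = ∑ x, (1 : MulChar (ZMod (p ^ e)) (ZMod (p ^ e))) x := by
        refine sum_congr rfl fun x _ => ?_
        by_cases hx : IsUnit x
        · obtain ⟨u, rfl⟩ := hx
          obtain ⟨m, rfl⟩ := hk
          rw [MulChar.one_apply_coe, ← Units.val_pow_eq_pow_val, pow_mul, pow_totient, one_pow,
            Units.val_one]
        · rw [MulChar.map_nonunit _ hx]
          exact pow_eq_zero_of_le hek (pow_eq_zero_of_not_isUnit_of_prime_pow hx)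
    _ = φ (p ^ e) := by rw [MulChar.sum_one_eq_card_units, card_units_eq_totient]

theorem sum_range_mul_eq_nsmul_sum {M : Type*} [AddCommMonoid M] {q : ℕ} [NeZero q]
    (f : ZMod q → M) (m : ℕ) : ∑ i ∈ range (q * m), f i = m • ∑ x, f x := by
  induction m with
  | zero => simp
  | succ m ih =>
    rw [Nat.mul_succ, sum_range_add, ih, succ_nsmul]
    congr 1
    refine sum_nbij' (fun i => i) (fun x => x.val) (by simp) (fun x _ => mem_range.mpr x.val_lt)
      (fun i hi => val_cast_of_lt (mem_range.mp hi)) (fun x _ => natCast_zmod_val x) ?_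
    intro i _
    simp

end ZMod

theorem natCast_S_eq_mul_sum {q k n : ℕ} [NeZero q] (hq : q ∣ n) (hk : k ≠ 0) :
    (S k n : ZMod q) = (n / q : ℕ) * ∑ x : ZMod q, x ^ k := by
  obtain ⟨m, rfl⟩ := hq
  have hS : S k (q * m) + 0 ^ k = ∑ i ∈ range (q * m), i ^ k + (q * m) ^ k := by
    rw [S, ← sum_range_succ, range_eq_Ico, sum_eq_sum_Ico_succ_bot (Nat.succ_pos _), add_comm]
    rfl
  rw [zero_pow hk, add_zero] at hS
  have := congrArg (Nat.cast : ℕ → ZMod q) hS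
  push_cast [ZMod.natCast_self, zero_mul, zero_pow hk, add_zero] at this
  rw [this, ZMod.sum_range_mul_eq_nsmul_sum (· ^ k), nsmul_eq_mul,
    Nat.mul_div_cancel_left m (NeZero.pos q)]

theorem natCast_S_self {p e n : ℕ} [Fact p.Prime] (he : e ≠ 0) (hn : p ^ e ∣ n) (hn0 : n ≠ 0) :
    (S n n : ZMod (p ^ e)) = if p - 1 ∣ n then -((n / p : ℕ) : ZMod (p ^ e)) else 0 := by
  have hp : p.Prime := Fact.out
  have hen : e ≤ n :=
    (Nat.lt_pow_self hp.one_lt).le.trans (Nat.le_of_dvd (Nat.pos_of_ne_zero hn0) hn)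
  rw [natCast_S_eq_mul_sum hn hn0]
  split_ifs with h
  · obtain ⟨e, rfl⟩ := Nat.exists_eq_add_one_of_ne_zero he
    have htot : φ (p ^ (e + 1)) = p ^ e * (p - 1) := Nat.totient_prime_pow_succ hp e
    have hcop : (p ^ e).Coprime (p - 1) :=
      ((Nat.coprime_self_sub_right hp.one_le).mpr (Nat.coprime_one_right p)).pow_left e
    rw [ZMod.sum_pow_prime_pow_of_totient_dvd
      (htot ▸ hcop.mul_dvd_of_dvd_of_dvd ((pow_dvd_pow p e.le_succ).trans hn) h) hen, htot]
    obtain ⟨m, rfl⟩ := hn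
    have hp0 : ((p : ℕ) : ZMod (p ^ (e + 1))) ^ (e + 1) = 0 := by
      rw [← Nat.cast_pow, ZMod.natCast_self]
    have hdiv : p ^ (e + 1) * m / p = p ^ e * m := by
      rw [pow_succ, mul_comm _ p, mul_assoc, Nat.mul_div_cancel_left _ hp.pos]
    rw [Nat.mul_div_cancel_left m (pow_pos hp.pos _), hdiv]
    push_cast [hp.one_le]
    linear_combination (m : ZMod (p ^ (e + 1))) * hp0
  · rw [ZMod.sum_pow_prime_pow_of_not_sub_one_dvd he h, mul_zero]

theorem S_self_modEq_prime_pow_iff {p e n : ℕ} (hp : p.Prime) (he : e ≠ 0) (hn : p ^ e ∣ n)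
    (hn0 : n ≠ 0) {a : ℕ} :
    S n n ≡ a [MOD p ^ e] ↔ p ^ e ∣ if p - 1 ∣ n then a + n / p else a := by
  have : Fact p.Prime := ⟨hp⟩
  rw [← ZMod.natCast_eq_natCast_iff, natCast_S_self he hn hn0]
  split_ifs
  · rw [neg_eq_iff_add_eq_zero, ← Nat.cast_add, ZMod.natCast_eq_zero_iff, add_comm]
  · rw [eq_comm, ZMod.natCast_eq_zero_iff]

theorem Nat.modEq_iff_forall_prime_pow_dvd {a b n : ℕ} :
    a ≡ b [MOD n] ↔ ∀ p k : ℕ, p.Prime → p ^ k ∣ n → a ≡ b [MOD p ^ k] := by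
  simp only [Nat.modEq_iff_dvd, Int.natCast_dvd]
  exact Nat.dvd_iff_prime_pow_dvd_dvd _ n

def LocalCriterion (a n p e : ℕ) : Prop :=
  p ^ e ∣ n → p ^ e ∣ if p - 1 ∣ n then a + n / p else a

instance (a n p e : ℕ) : Decidable (LocalCriterion a n p e) :=
  inferInstanceAs (Decidable (_ → _))

theorem S_self_modEq_iff {a n : ℕ} (hn : n ≠ 0) :
    S n n ≡ a [MOD n] ↔ ∀ p e, p.Prime → e ≠ 0 → LocalCriterion a n p e := by
  rw [Nat.modEq_iff_forall_prime_pow_dvd]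
  refine forall₂_congr fun p e => ⟨fun h hp he hd => ?_, fun h hp hd => ?_⟩
  · exact (S_self_modEq_prime_pow_iff hp he hd hn).mp (h hp hd)
  · rcases eq_or_ne e 0 with rfl | he
    · rw [pow_zero]; exact Nat.modEq_one
    · exact (S_self_modEq_prime_pow_iff hp he hd hn).mpr (h hp he hd)

section

variable {a n : ℕ}

theorem sub_one_dvd_of_S_self_modEq {p e : ℕ} (hn : n ≠ 0) (hs : S n n ≡ a [MOD n])
    (hp : p.Prime) (he : e ≠ 0) (hd : p ^ e ∣ n) (ha : ¬p ^ e ∣ a) : p - 1 ∣ n := by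
  by_contra h
  have := (S_self_modEq_iff hn).mp hs p e hp he hd
  rw [if_neg h] at this
  exact ha this

theorem not_pow_succ_dvd_of_S_self_modEq {p e : ℕ} (hn : n ≠ 0) (hs : S n n ≡ a [MOD n])
    (hp : p.Prime) (ha : ¬p ^ e ∣ a) : ¬p ^ (e + 1) ∣ n := by
  intro hd
  have hpe : ¬p ^ (e + 1) ∣ a := fun h => ha ((pow_dvd_pow p e.le_succ).trans h)
  have h := (S_self_modEq_iff hn).mp hs p (e + 1) hp e.succ_ne_zero hd
  rw [if_pos (sub_one_dvd_of_S_self_modEq hn hs hp e.succ_ne_zero hd hpe)] at h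
  have hq : p ^ e ∣ n / p := Nat.dvd_div_of_mul_dvd (by rwa [← pow_succ'])
  exact ha ((Nat.dvd_add_left hq).mp ((pow_dvd_pow p e.le_succ).trans h))

theorem sub_one_dvd_of_S_self_modEq_43 {p : ℕ} (hn : n ≠ 0) (hs : S n n ≡ 43 [MOD n])
    (hp : p.Prime) (hpn : p ∣ n) (hp43 : p ≠ 43) : p - 1 ∣ n :=
  sub_one_dvd_of_S_self_modEq hn hs hp one_ne_zero (by rwa [pow_one])
    (by rwa [pow_one, Nat.prime_dvd_prime_iff_eq hp (by norm_num)])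

theorem not_pow_dvd_of_S_self_modEq_43 {p : ℕ} (hn : n ≠ 0) (hs : S n n ≡ 43 [MOD n])
    (hp : p.Prime) : ¬p ^ ((if p = 43 then 2 else 1) + 1) ∣ n := by
  split_ifs with h
  · subst h
    exact not_pow_succ_dvd_of_S_self_modEq (e := 2) hn hs hp (by norm_num)
  · exact not_pow_succ_dvd_of_S_self_modEq (e := 1) hn hs hp
      (by rwa [pow_one, Nat.prime_dvd_prime_iff_eq hp (by norm_num)])

end

theorem Nat.dvd_prod_pow_of_primeFactors_subset {n : ℕ} {s : Finset ℕ} {k : ℕ → ℕ} (hn : n ≠ 0)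
    (hs : n.primeFactors ⊆ s) (hk : ∀ p ∈ n.primeFactors, ¬p ^ (k p + 1) ∣ n) :
    n ∣ ∏ p ∈ s, p ^ k p := by
  have hle : ∀ p ∈ n.primeFactors, n.factorization p ≤ k p := fun p hp => by
    by_contra! h
    exact hk p hp (((Nat.prime_of_mem_primeFactors hp).pow_dvd_iff_le_factorization hn).mpr h)
  calc n = ∏ p ∈ n.primeFactors, p ^ n.factorization p :=
        Nat.prod_primeFactors_pow_factorization hn
    _ ∣ ∏ p ∈ n.primeFactors, p ^ k p :=
        prod_dvd_prod_of_dvd _ _ fun p hp => pow_dvd_pow p (hle p hp)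
    _ ∣ ∏ p ∈ s, p ^ k p := prod_dvd_prod_of_subset _ _ _ hs

theorem two_mul_add_one_mem_of_dvd {d : ℕ} (hd : d ∣ 3 * 7 * 43 ^ 2 * 77659)
    (hp : (2 * d + 1).Prime) : 2 * d + 1 ∈ ({2, 3, 7, 43, 77659} : Finset ℕ) := by
  have hmem := Nat.mem_divisors.mpr ⟨hd, by norm_num⟩
  rw [Nat.divisors_mul, Nat.divisors_mul, Nat.divisors_mul,
    (by norm_num : Nat.Prime 77659).divisors] at hmem
  simp only [Nat.divisors_ofNat, Nat.reducePow, mem_mul, mem_insert, mem_singleton] at hmem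
  obtain ⟨_, ⟨_, ⟨x, hx, y, hy, rfl⟩, z, hz, rfl⟩, w, hw, rfl⟩ := hmem
  rcases hx with rfl | rfl <;> rcases hy with rfl | rfl <;> rcases hz with rfl | rfl | rfl <;>
    rcases hw with rfl | rfl <;> revert hp <;> norm_num

theorem primeFactors_subset_of_S_self_modEq_43 {n : ℕ} (hn : n ≠ 0) (hs : S n n ≡ 43 [MOD n]) :
    n.primeFactors ⊆ {2, 3, 7, 43, 77659} := by
  by_contra h
  obtain ⟨r, hr, hmin⟩ := (n.primeFactors \ {2, 3, 7, 43, 77659}).exists_min_image id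
    (sdiff_nonempty.mpr h)
  rw [mem_sdiff, Nat.mem_primeFactors] at hr
  obtain ⟨⟨hrp, hrn, -⟩, hrS⟩ := hr
  have hr1 : r - 1 ∣ n :=
    sub_one_dvd_of_S_self_modEq_43 hn hs hrp hrn (by rintro rfl; simp at hrS)
  obtain ⟨d, rfl⟩ := hrp.odd_of_ne_two (by rintro rfl; simp at hrS)
  rw [Nat.add_sub_cancel] at hr1
  have hd0 : d ≠ 0 := by rintro rfl; norm_num at hrp
  have hdn : d ∣ n := (dvd_mul_left d 2).trans hr1
  have hd2 : ¬2 ∣ d := fun h2 =>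
    not_pow_dvd_of_S_self_modEq_43 hn hs Nat.prime_two ((mul_dvd_mul_left 2 h2).trans hr1)
  have hdS : d.primeFactors ⊆ {3, 7, 43, 77659} := by
    intro q hq
    obtain ⟨hqp, hqd, -⟩ := Nat.mem_primeFactors.mp hq
    have hqS : q ∈ ({2, 3, 7, 43, 77659} : Finset ℕ) := by
      by_contra hqS
      have hrq : 2 * d + 1 ≤ q :=
        hmin q (mem_sdiff.mpr ⟨Nat.mem_primeFactors.mpr ⟨hqp, hqd.trans hdn, hn⟩, hqS⟩)
      have hqd' : q ≤ d := Nat.le_of_dvd (Nat.pos_of_ne_zero hd0) hqd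
      omega
    rcases mem_insert.mp hqS with rfl | hq'
    · exact absurd hqd hd2
    · exact hq'
  have hdvd : d ∣ 3 * 7 * 43 ^ 2 * 77659 := by
    have := Nat.dvd_prod_pow_of_primeFactors_subset hd0 hdS
      (k := fun p => if p = 43 then 2 else 1) fun p hp h =>
        not_pow_dvd_of_S_self_modEq_43 hn hs (Nat.prime_of_mem_primeFactors hp) (h.trans hdn)
    norm_num [prod_insert] at this ⊢
    exact this
  exact hrS (two_mul_add_one_mem_of_dvd hdvd hrp)

theorem dvd_of_S_self_modEq_43 {n : ℕ} (hn : n ≠ 0) (hs : S n n ≡ 43 [MOD n]) :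
    n ∣ 2 * 3 * 7 * 43 ^ 2 * 77659 := by
  have := Nat.dvd_prod_pow_of_primeFactors_subset hn
    (primeFactors_subset_of_S_self_modEq_43 hn hs) (k := fun p => if p = 43 then 2 else 1)
    fun p hp => not_pow_dvd_of_S_self_modEq_43 hn hs (Nat.prime_of_mem_primeFactors hp)
  norm_num [prod_insert] at this ⊢
  exact this

theorem S_self_modEq_iff_of_dvd {a n : ℕ} (hN : n ∣ 2 * 3 * 7 * 43 ^ 2 * 77659) (hn : n ≠ 0) :
    S n n ≡ a [MOD n] ↔
      ∀ p ∈ ({2, 3, 7, 43, 77659} : Finset ℕ), ∀ e ∈ ({1, 2} : Finset ℕ),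
        LocalCriterion a n p e := by
  have hprime : ∀ p ∈ ({2, 3, 7, 43, 77659} : Finset ℕ), p.Prime := by
    simp only [mem_insert, mem_singleton]
    rintro p (rfl | rfl | rfl | rfl | rfl) <;> norm_num
  have hcube : ∀ p ∈ ({2, 3, 7, 43, 77659} : Finset ℕ),
      ¬p ^ 3 ∣ 2 * 3 * 7 * 43 ^ 2 * 77659 := by
    decide
  rw [S_self_modEq_iff hn]
  constructor
  · intro h p hp e he
    exact h p e (hprime p hp) (by rintro rfl; simp at he)
  · intro h p e hp he hd
    have hpN : p ∈ (2 * 3 * 7 * 43 ^ 2 * 77659).primeFactors :=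
      Nat.mem_primeFactors.mpr ⟨hp, (dvd_pow_self p he).trans (hd.trans hN), by norm_num⟩
    have hpS : p ∈ ({2, 3, 7, 43, 77659} : Finset ℕ) := by
      rwa [Nat.primeFactors_mul (by norm_num) (by norm_num),
        Nat.primeFactors_mul (by norm_num) (by norm_num),
        Nat.primeFactors_mul (by norm_num) (by norm_num),
        Nat.primeFactors_mul (by norm_num) (by norm_num), Nat.primeFactors_pow _ two_ne_zero,
        Nat.prime_two.primeFactors, Nat.prime_three.primeFactors,
        (by norm_num : Nat.Prime 7).primeFactors, (by norm_num : Nat.Prime 43).primeFactors,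
        (by norm_num : Nat.Prime 77659).primeFactors] at hpN
    have he3 : e < 3 := by
      by_contra! h3
      exact hcube p hpS ((pow_dvd_pow p h3).trans (hd.trans hN))
    exact h p hpS e (by simp only [mem_insert, mem_singleton]; omega) hd

theorem filter_divisors_localCriterion_43 :
    {n ∈ Nat.divisors (2 * 3 * 7 * 43 ^ 2 * 77659) |
        ∀ p ∈ ({2, 3, 7, 43, 77659} : Finset ℕ), ∀ e ∈ ({1, 2} : Finset ℕ),
          LocalCriterion 43 n p e} =
      {1, 2, 6, 42, 43, 86, 258, 77658} := by
  rw [Nat.divisors_mul, Nat.divisors_mul, Nat.divisors_mul, Nat.divisors_mul,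
    (by norm_num : Nat.Prime 77659).divisors]
  simp only [Nat.divisors_ofNat, Nat.reducePow]
  decide

theorem mem_divisors_filter_localCriterion_iff {n : ℕ} :
    n ∈ {n ∈ Nat.divisors (2 * 3 * 7 * 43 ^ 2 * 77659) |
        ∀ p ∈ ({2, 3, 7, 43, 77659} : Finset ℕ), ∀ e ∈ ({1, 2} : Finset ℕ),
          LocalCriterion 43 n p e} ↔
      0 < n ∧ S n n ≡ 43 [MOD n] := by
  rw [mem_filter, Nat.mem_divisors]
  constructor
  · rintro ⟨⟨hN, -⟩, h⟩
    have hn := Nat.pos_of_dvd_of_pos hN (by norm_num)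
    exact ⟨hn, (S_self_modEq_iff_of_dvd hN hn.ne').mpr h⟩
  · rintro ⟨hn, hs⟩
    have hN := dvd_of_S_self_modEq_43 hn.ne' hs
    exact ⟨⟨hN, by norm_num⟩, (S_self_modEq_iff_of_dvd hN hn.ne').mp hs⟩

/-- `M_43 = {1, 2, 6, 42, 43, 86, 258, 77658}`. -/
theorem stmt_11 :
    {n : ℕ | 0 < n ∧ S n n ≡ 43 [MOD n]} = {1, 2, 6, 42, 43, 86, 258, 77658} := by
  ext n
  rw [Set.mem_ofPred_eq, ← mem_divisors_filter_localCriterion_iff,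
    filter_divisors_localCriterion_43]
  simp only [mem_insert, mem_singleton, Set.mem_insert_iff, Set.mem_singleton_iff]
end

section
/- Let p be a prime with p ∉ {2, 3, 7, 43}. If none of the eight integers 1 + 2p, 1 + 6p, 1 + 14p, 1 + 42p, 1 + 86p, 1 + 258p, 1 + 602p, 1 + 1806p is prime, then M_p ⊆ {1, 2, 6, 42, 1806} ∪ p · {1, 2, 6, 42, 1806}; in particular M_p is finite. -/
/-!
If `Q ∣ n` and `i ↦ i ^ n` is `Q`-periodic modulo `N`, then `S n n ≡ (n / Q) * S n Q (mod N)`,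
and modulo a prime `q` the block sum `S n q` is `∑_{x ∈ 𝔽_q} x ^ n`, which vanishes unless
`q - 1 ∣ n`. With `N = Q = q` for a prime `q ≠ p` dividing `n` this gives `q² ∤ n` and
`q - 1 ∣ n`; with `N = p²`, `Q = p` it gives `p³ ∤ n`, and `p - 1 ∣ n` when `p² ∣ n`.
So `n = p ^ k * m` with `k ≤ 2`, `m` squarefree and `q - 1 ∣ p ^ k * m` for every prime `q ∣ m`.

Adjoin the primes of `m` in increasing order to a product `m'` already known to lie in `M₁`:
the new prime satisfies `q - 1 = a * b` with `a ∣ p`, `b ∣ m' ∣ 1806`. If `a = 1` then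
`q ∈ {2, 3, 7, 43}` and `q * m' ∈ M₁`; if `a = p` then `q` is odd, so `b` is even and
`q = 1 + b * p` is one of the excluded primes. For `k = 2` the same argument applies to the part
`gcd m (p - 1)!` of `m` below `p`, which `p - 1` divides, forcing `p - 1 ∣ 1806`.
-/

open Finset

lemma Function.Periodic.sum_range_mul {M : Type*} [AddCommMonoid M] {f : ℕ → M} {Q : ℕ}
    (h : Function.Periodic f Q) (c : ℕ) :
    ∑ i ∈ range (c * Q), f i = c • ∑ i ∈ range Q, f i := by
  induction c with
  | zero => simp
  | succ c ih =>
    rw [add_mul, one_mul, sum_range_add, ih, succ_nsmul]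
    congr 1
    exact sum_congr rfl fun i _ => by rw [add_comm]; exact (h.nat_mul c) i

lemma sum_range_natCast_zmod {M : Type*} [AddCommMonoid M] (Q : ℕ) [NeZero Q] (g : ZMod Q → M) :
    ∑ i ∈ range Q, g i = ∑ x : ZMod Q, g x :=
  sum_nbij' (fun i => (i : ZMod Q)) ZMod.val (by simp) (by simp [ZMod.val_lt])
    (fun i hi => ZMod.val_cast_of_lt (mem_range.mp hi)) (fun x _ => ZMod.natCast_zmod_val x)
    (fun _ _ => rfl)

lemma FiniteField.sum_pow_eq_zero_of_not_dvd {K : Type*} [Field K] [Fintype K] {n : ℕ}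
    (h : ¬ Fintype.card K - 1 ∣ n) : ∑ x : K, x ^ n = 0 := by
  obtain ⟨u, hu⟩ : ∃ u : Kˣ, u ^ n ≠ 1 := by
    by_contra! h'
    exact h ((FiniteField.forall_pow_eq_one_iff K n).mp h')
  have hfix : (u : K) ^ n * ∑ x : K, x ^ n = ∑ x : K, x ^ n := by
    simp_rw [mul_sum, ← mul_pow]
    exact Equiv.sum_comp (Equiv.mulLeft₀ (u : K) u.ne_zero) (· ^ n)
  have hu' : (u : K) ^ n - 1 ≠ 0 := by
    rw [sub_ne_zero, ← Units.val_pow_eq_pow_val]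
    exact fun h => hu (Units.ext h)
  refine (mul_eq_zero.mp ?_).resolve_left hu'
  rw [sub_mul, hfix, one_mul, sub_self]

lemma ZMod.add_natCast_pow_of_dvd {p n : ℕ} (hpn : p ∣ n) (a : ZMod (p ^ 2)) :
    (a + p) ^ n = a ^ n := by
  obtain ⟨m, rfl⟩ := hpn
  have h := dvd_sub_pow_of_dvd_sub (p := p) (a := a + p) (b := a) (by simp) 1
  rw [pow_one, ← Nat.cast_pow, ZMod.natCast_self, zero_dvd_iff, sub_eq_zero] at h
  rw [pow_mul, pow_mul, h]

lemma sub_one_dvd_of_dvd_mul_of_le {q r a : ℕ} (hq : q.Prime) (hr : 2 ≤ r) (hrq : r ≤ q)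
    (h : r - 1 ∣ q * a) : r - 1 ∣ a :=
  (Nat.Coprime.symm <| hq.coprime_iff_not_dvd.mpr fun hdvd =>
    absurd (Nat.le_of_dvd (by omega) hdvd) (by omega)).dvd_of_dvd_mul_left h

lemma S_eq_sum_range (k m : ℕ) : S k m = ∑ i ∈ range m, (i + 1) ^ k := by
  rw [S, ← Ico_add_one_right_eq_Icc, sum_Ico_eq_sum_range]
  simp [add_comm]

lemma cast_S_mul_s12 {N Q n : ℕ} (hper : Function.Periodic (fun i : ℕ => (i : ZMod N) ^ n) Q)
    (c : ℕ) : (S n (c * Q) : ZMod N) = c * S n Q := by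
  have hper' : Function.Periodic (fun i : ℕ => ((i + 1 : ℕ) : ZMod N) ^ n) Q := fun i => by
    simpa [add_right_comm] using hper (i + 1)
  simp only [S_eq_sum_range, Nat.cast_sum, Nat.cast_pow]
  rw [← nsmul_eq_mul]
  exact_mod_cast hper'.sum_range_mul c

lemma cast_S_self {N Q n : ℕ} (hQn : Q ∣ n)
    (hper : Function.Periodic (fun i : ℕ => (i : ZMod N) ^ n) Q) :
    (S n n : ZMod N) = (n / Q : ℕ) * S n Q := by
  have h := cast_S_mul_s12 hper (n / Q)
  rwa [Nat.div_mul_cancel hQn] at h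

lemma cast_S_eq_sum_pow (n Q : ℕ) [NeZero Q] : (S n Q : ZMod Q) = ∑ x : ZMod Q, x ^ n := by
  simp only [S_eq_sum_range, Nat.cast_sum, Nat.cast_pow, Nat.cast_add_one]
  rw [sum_range_natCast_zmod Q (fun x => (x + 1) ^ n)]
  exact Equiv.sum_comp (Equiv.addRight 1) (· ^ n)

lemma not_dvd_and_sub_one_dvd_of_mul_sum_pow_ne_zero {q c n : ℕ} [Fact q.Prime]
    (h : (c : ZMod q) * ∑ x : ZMod q, x ^ n ≠ 0) : ¬ q ∣ c ∧ q - 1 ∣ n := by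
  refine ⟨fun hqc => h ?_, by_contra fun hn => h ?_⟩
  · rw [(ZMod.natCast_eq_zero_iff c q).mpr hqc, zero_mul]
  · rw [FiniteField.sum_pow_eq_zero_of_not_dvd (by rwa [ZMod.card]), mul_zero]

lemma not_sq_dvd_and_sub_one_dvd {a q n : ℕ} (hq : q.Prime) (hqn : q ∣ n) (hqa : ¬ q ∣ a)
    (h : S n n ≡ a [MOD n]) : ¬ q ^ 2 ∣ n ∧ q - 1 ∣ n := by
  have := Fact.mk hq
  have hper : Function.Periodic (fun i : ℕ => (i : ZMod q) ^ n) q := fun i => by simp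
  have hcast : (a : ZMod q) = (n / q : ℕ) * ∑ x : ZMod q, x ^ n := by
    rw [← (ZMod.natCast_eq_natCast_iff _ _ _).mpr (h.of_dvd hqn), cast_S_self hqn hper,
      cast_S_eq_sum_pow]
  have ha : (a : ZMod q) ≠ 0 := by rwa [Ne, ZMod.natCast_eq_zero_iff]
  obtain ⟨hc, hn⟩ := not_dvd_and_sub_one_dvd_of_mul_sum_pow_ne_zero (hcast ▸ ha)
  exact ⟨fun hsq => hc ((Nat.dvd_div_iff_mul_dvd hqn).mpr (by rwa [← sq])), hn⟩

lemma not_pow_three_dvd_and_sub_one_dvd {p n : ℕ} (hp : p.Prime) (hpn : p ^ 2 ∣ n)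
    (h : S n n ≡ p [MOD n]) : ¬ p ^ 3 ∣ n ∧ p - 1 ∣ n := by
  have := Fact.mk hp
  have hp1 : p ∣ n := (dvd_pow_self p two_ne_zero).trans hpn
  have hper : Function.Periodic (fun i : ℕ => (i : ZMod (p ^ 2)) ^ n) p := fun i => by
    simpa using ZMod.add_natCast_pow_of_dvd hp1 (i : ZMod (p ^ 2))
  have hdiv : n / p = p * (n / p ^ 2) := by
    rw [sq, ← Nat.div_div_eq_div_mul,
      Nat.mul_div_cancel' ((Nat.dvd_div_iff_mul_dvd hp1).mpr (by rwa [← sq]))]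
  have hmod_sq : p * ((n / p ^ 2) * S n p) ≡ p * 1 [MOD p * p] := by
    rw [← sq, ← ZMod.natCast_eq_natCast_iff, mul_one, ← mul_assoc, ← hdiv, Nat.cast_mul,
      ← cast_S_self hp1 hper]
    exact (ZMod.natCast_eq_natCast_iff _ _ _).mpr (h.of_dvd hpn)
  have hcast : ((n / p ^ 2 : ℕ) : ZMod p) * ∑ x : ZMod p, x ^ n = 1 := by
    rw [← cast_S_eq_sum_pow, ← Nat.cast_mul, ← Nat.cast_one]
    exact (ZMod.natCast_eq_natCast_iff _ _ _).mpr (Nat.ModEq.mul_left_cancel' hp.ne_zero hmod_sq)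
  obtain ⟨hc, hn⟩ := not_dvd_and_sub_one_dvd_of_mul_sum_pow_ne_zero (hcast ▸ one_ne_zero)
  exact ⟨fun hcube => hc ((Nat.dvd_div_iff_mul_dvd hpn).mpr (by rwa [← pow_succ])), hn⟩

def M₁ : Finset ℕ := {1, 2, 6, 42, 1806}

lemma dvd_1806_of_mem_M₁ : ∀ m ∈ M₁, m ∣ 1806 := by decide

lemma prime_mem_of_sub_one_dvd_1806 {q : ℕ} (hq : q.Prime) (h : q - 1 ∣ 1806) :
    q ∈ ({2, 3, 7, 43} : Finset ℕ) := by
  have hdec : ∀ d ∈ Nat.divisors 1806, (d + 1).Prime → d + 1 ∈ ({2, 3, 7, 43} : Finset ℕ) := by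
    decide +kernel
  simpa [Nat.sub_add_cancel hq.one_le] using
    hdec (q - 1) (by simpa using h) (by rwa [Nat.sub_add_cancel hq.one_le])

lemma mul_mem_M₁ {p q m : ℕ} (hp : p.Prime) (hp2 : p ≠ 2)
    (hnp : ∀ k ∈ ({2, 6, 14, 42, 86, 258, 602, 1806} : Finset ℕ), ¬ Nat.Prime (1 + k * p))
    (hm : m ∈ M₁) (hq : q.Prime) (hqm : ¬ q ∣ m) (h : q - 1 ∣ p * m) : q * m ∈ M₁ := by
  obtain ⟨a, b, ha, hb, hab⟩ := Nat.dvd_mul.mp h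
  have hb1806 : b ∣ 1806 := hb.trans (dvd_1806_of_mem_M₁ m hm)
  rcases hp.eq_one_or_self_of_dvd a ha with rfl | rfl
  · rw [one_mul] at hab
    have hdec : ∀ m ∈ M₁, ∀ q ∈ ({2, 3, 7, 43} : Finset ℕ), q - 1 ∣ m → ¬ q ∣ m → q * m ∈ M₁ := by
      decide +kernel
    exact hdec m hm q (prime_mem_of_sub_one_dvd_1806 hq (hab ▸ hb1806)) (hab ▸ hb) hqm
  · have hq2 : q ≠ 2 := by
      rintro rfl
      exact hp.one_lt.ne' (Nat.eq_one_of_mul_eq_one_right hab)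
    have h2b : 2 ∣ b := by
      have h2ab : 2 ∣ a * b := by
        obtain ⟨r, hr⟩ := hq.odd_of_ne_two hq2
        omega
      refine (Nat.prime_two.dvd_mul.mp h2ab).resolve_left fun h2a => hp2 ?_
      exact ((Nat.prime_dvd_prime_iff_eq Nat.prime_two hp).mp h2a).symm
    have hdec : ∀ b ∈ Nat.divisors 1806, 2 ∣ b →
        b ∈ ({2, 6, 14, 42, 86, 258, 602, 1806} : Finset ℕ) := by
      decide +kernel
    refine absurd ?_ (hnp b (hdec b (by simpa using hb1806) h2b))
    rwa [mul_comm, hab, Nat.add_sub_cancel' hq.one_le]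

lemma prod_mem_M₁ {p : ℕ} (hp : p.Prime) (hp2 : p ≠ 2)
    (hnp : ∀ k ∈ ({2, 6, 14, 42, 86, 258, 602, 1806} : Finset ℕ), ¬ Nat.Prime (1 + k * p))
    (s : Finset ℕ) (hs : ∀ q ∈ s, q.Prime) (h : ∀ q ∈ s, q - 1 ∣ p * ∏ r ∈ s, r) :
    ∏ r ∈ s, r ∈ M₁ := by
  induction s using Finset.induction_on_max with
  | empty => decide
  | insert q s hlt ih =>
    have hqs : q ∉ s := fun hq => (hlt q hq).false
    have hq := hs q (mem_insert_self q s)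
    rw [prod_insert hqs] at h ⊢
    have hdvd : ∀ r ∈ insert q s, r - 1 ∣ p * ∏ x ∈ s, x := fun r hr =>
      sub_one_dvd_of_dvd_mul_of_le hq (hs r hr).two_le
        ((mem_insert.mp hr).elim le_of_eq fun hr => (hlt r hr).le)
        (by rw [mul_left_comm]; exact h r hr)
    refine mul_mem_M₁ hp hp2 hnp (ih (fun r hr => hs r (mem_insert_of_mem hr))
      (fun r hr => hdvd r (mem_insert_of_mem hr))) hq ?_ (hdvd q (mem_insert_self q s))
    rw [Prime.dvd_finsetProd_iff hq.prime]
    rintro ⟨r, hr, hqr⟩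
    exact (hlt r hr).ne' ((Nat.prime_dvd_prime_iff_eq hq (hs r (mem_insert_of_mem hr))).mp hqr)

lemma mem_M₁_of_squarefree {p m : ℕ} (hp : p.Prime) (hp2 : p ≠ 2)
    (hnp : ∀ k ∈ ({2, 6, 14, 42, 86, 258, 602, 1806} : Finset ℕ), ¬ Nat.Prime (1 + k * p))
    (hm : Squarefree m) (h : ∀ q, q.Prime → q ∣ m → q - 1 ∣ p * m) : m ∈ M₁ := by
  have hprod := Nat.prod_primeFactors_of_squarefree hm
  rw [← hprod]
  refine prod_mem_M₁ hp hp2 hnp _ (fun q hq => (Nat.mem_primeFactors.mp hq).1) fun q hq => ?_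
  rw [hprod]
  exact h q (Nat.prime_of_mem_primeFactors hq) (Nat.dvd_of_mem_primeFactors hq)

lemma prime_mem_of_sub_one_dvd_sq_mul {p m : ℕ} (hp : p.Prime) (hp2 : p ≠ 2)
    (hnp : ∀ k ∈ ({2, 6, 14, 42, 86, 258, 602, 1806} : Finset ℕ), ¬ Nat.Prime (1 + k * p))
    (hm : Squarefree m) (h : ∀ q, q.Prime → q ∣ m → q - 1 ∣ p ^ 2 * m)
    (hp1 : p - 1 ∣ p ^ 2 * m) : p ∈ ({2, 3, 7, 43} : Finset ℕ) := by
  set d := Nat.gcd m (p - 1).factorial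
  have hbelow : ∀ r, 2 ≤ r → r ≤ p → r - 1 ∣ p ^ 2 * m → r - 1 ∣ d := fun r hr hrp hdvd => by
    rw [sq, mul_assoc] at hdvd
    exact Nat.dvd_gcd (sub_one_dvd_of_dvd_mul_of_le hp hr hrp
      (sub_one_dvd_of_dvd_mul_of_le hp hr hrp hdvd)) (Nat.dvd_factorial (by omega) (by omega))
  have hd : d ∈ M₁ := by
    refine mem_M₁_of_squarefree hp hp2 hnp (hm.squarefree_of_dvd (Nat.gcd_dvd_left _ _))
      fun q hq hqd => ?_
    have hqp : q ≤ p - 1 := hq.dvd_factorial.mp (hqd.trans (Nat.gcd_dvd_right _ _))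
    exact (hbelow q hq.two_le (by omega) (h q hq (hqd.trans (Nat.gcd_dvd_left _ _)))).mul_left p
  exact prime_mem_of_sub_one_dvd_1806 hp
    ((hbelow p hp.two_le le_rfl hp1).trans (dvd_1806_of_mem_M₁ d hd))

lemma mem_M₁_union_mul_M₁ {p n : ℕ} (hp : p.Prime) (hne : p ∉ ({2, 3, 7, 43} : Finset ℕ))
    (hnp : ∀ k ∈ ({2, 6, 14, 42, 86, 258, 602, 1806} : Finset ℕ), ¬ Nat.Prime (1 + k * p))
    (hn : 0 < n) (h : S n n ≡ p [MOD n]) : n ∈ (M₁ : Set ℕ) ∪ (p * ·) '' M₁ := by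
  have hp2 : p ≠ 2 := by rintro rfl; simp at hne
  obtain ⟨k, m, hpm, rfl⟩ := Nat.exists_eq_pow_mul_and_not_dvd hn.ne' p hp.ne_one
  have hlocal : ∀ q, q.Prime → q ∣ m → ¬ q ^ 2 ∣ p ^ k * m ∧ q - 1 ∣ p ^ k * m :=
    fun q hq hqm => not_sq_dvd_and_sub_one_dvd hq (dvd_mul_of_dvd_right hqm _)
      (fun hqp => hpm ((Nat.prime_dvd_prime_iff_eq hq hp).mp hqp ▸ hqm)) h
  have hm : Squarefree m := Nat.squarefree_iff_prime_squarefree.mpr fun q hq hqq =>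
    (hlocal q hq ((dvd_mul_right q q).trans hqq)).1 (by rw [sq]; exact dvd_mul_of_dvd_right hqq _)
  have hk : k ≤ 2 := by
    by_contra hk
    have hp3 : p ^ 3 ∣ p ^ k * m := dvd_mul_of_dvd_left (pow_dvd_pow p (by omega)) m
    exact (not_pow_three_dvd_and_sub_one_dvd hp ((pow_dvd_pow p (by norm_num)).trans hp3) h).1 hp3
  interval_cases k
  · left
    simpa using mem_M₁_of_squarefree hp hp2 hnp hm fun q hq hqm => by
      simpa using (hlocal q hq hqm).2.mul_left p
  · right
    exact ⟨m, mem_M₁_of_squarefree hp hp2 hnp hm fun q hq hqm => by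
      simpa using (hlocal q hq hqm).2, by simp⟩
  · exact absurd (prime_mem_of_sub_one_dvd_sq_mul hp hp2 hnp hm
      (fun q hq hqm => (hlocal q hq hqm).2)
      (not_pow_three_dvd_and_sub_one_dvd hp (dvd_mul_right _ _) h).2) hne

/-- If `p ∉ {2, 3, 7, 43}` is a prime and none of `1 + 2p, 1 + 6p, 1 + 14p, 1 + 42p,
1 + 86p, 1 + 258p, 1 + 602p, 1 + 1806p` is prime, then
`M_p ⊆ M_1 ∪ p·M_1` where `M_1 = {1, 2, 6, 42, 1806}`; in particular `M_p` is finite. -/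
theorem stmt_12 (p : ℕ) (hp : p.Prime) (hne : p ∉ ({2, 3, 7, 43} : Set ℕ))
    (hnp : ∀ k ∈ ({2, 6, 14, 42, 86, 258, 602, 1806} : Finset ℕ),
      ¬ Nat.Prime (1 + k * p)) :
    {n : ℕ | 0 < n ∧ S n n ≡ p [MOD n]} ⊆
        ({1, 2, 6, 42, 1806} : Set ℕ) ∪
          (fun x => p * x) '' ({1, 2, 6, 42, 1806} : Set ℕ) ∧
      {n : ℕ | 0 < n ∧ S n n ≡ p [MOD n]}.Finite := by
  have hM₁ : (M₁ : Set ℕ) = {1, 2, 6, 42, 1806} := by simp [M₁]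
  have hincl : {n : ℕ | 0 < n ∧ S n n ≡ p [MOD n]} ⊆ (M₁ : Set ℕ) ∪ (p * ·) '' M₁ :=
    fun n ⟨hn, h⟩ => mem_M₁_union_mul_M₁ hp (by simpa using hne) hnp hn h
  rw [← hM₁]
  exact ⟨hincl, (Set.toFinite _).subset hincl⟩
end
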